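/- Suppose {f_n} and {g_n} are sequences of complex numbers such that f_n = ∑_{r=0}^{⌊n/2⌋} C(n, r) g_{n-2r} for all n ≥ 0. Then g_n = ∑_{r=0}^{⌊n/2⌋} D_n^r f_{n-2r} for all n ≥ 0, where D_n^r = (-1)^r (C(n-r, r) + C(n-r-1, r-1)). -/

import Mathlib

/-- Binomial coefficient `C(n,r)` for integer arguments: zero if `r < 0` or
`0 ≤ n < r`, the usual binomial for `0 ≤ r ≤ n`, and the generalized binomial
for negative upper index. -/
def C (n r : ℤ) : ℤ :=
  if r < 0 then 0
  else if 0 ≤ n then (n.toNat.choose r.toNat : ℤ)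
  else (-1) ^ r.toNat * ((r - n - 1).toNat.choose r.toNat : ℤ)

def D (n r : ℤ) : ℤ := (-1) ^ r.toNat * (C (n - r) r + C (n - r - 1) (r - 1))

/-!
Substituting the expansion of `f` into the right-hand side and collecting the coefficient of
`g (n - 2k)` reduces the theorem to the orthogonality relation
`∑_{r ≤ k} D_n^r C(n-2r, k-r) = [k = 0]` for `k ≤ n`. Since `C` at a negative upper index is the
generalized binomial coefficient, Pascal's rule holds for all integers, whence
`D_n^r = D_{n-1}^r - D_{n-2}^{r-1}`; so the left side satisfies a three-term recurrence in `n`.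
It vanishes at `n = k ≥ 1`, and induction on `k`, then on `n`, gives the relation.
-/

open Finset

lemma C_of_neg (n : ℤ) {r : ℤ} (hr : r < 0) : C n r = 0 := by simp [C, hr]

lemma C_natCast_right (n : ℤ) (r : ℕ) : C n r = Ring.choose n r := by
  rw [C, if_neg (by omega)]
  split_ifs with hn
  · lift n to ℕ using hn
    simp [Ring.choose_natCast]
  · obtain ⟨m, rfl⟩ : ∃ m : ℕ, n = -m := ⟨n.natAbs, by omega⟩
    rw [Ring.choose_neg, show (m : ℤ) + r - 1 = ((m + r - 1 : ℕ) : ℤ) by omega,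
      Ring.choose_natCast, Units.smul_def, Int.coe_negOnePow_natCast, smul_eq_mul,
      show ((r : ℤ) - -m - 1).toNat = m + r - 1 by omega]
    simp

lemma C_zero_right (n : ℤ) : C n 0 = 1 := by
  simpa using C_natCast_right n 0

lemma C_self (n : ℕ) : C n n = 1 := by
  simp [C]

lemma C_eq_zero_of_lt {n r : ℤ} (hn : 0 ≤ n) (hnr : n < r) : C n r = 0 := by
  rw [C, if_neg (by omega), if_pos hn, Nat.choose_eq_zero_of_lt (by omega), Nat.cast_zero]

lemma C_pascal (n r : ℤ) : C n r = C (n - 1) r + C (n - 1) (r - 1) := by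
  rcases lt_or_ge r 0 with hr | hr
  · simp [C_of_neg _ hr, C_of_neg _ (show r - 1 < 0 by omega)]
  lift r to ℕ using hr
  cases r with
  | zero => simp [C_zero_right, C_of_neg]
  | succ k =>
    push_cast
    simp only [add_sub_cancel_right, C_natCast_right]
    rw [← Nat.cast_succ, C_natCast_right, C_natCast_right, add_comm (Ring.choose _ _)]
    simpa using Ring.choose_succ_succ (n - 1) k

lemma C_neg_one (r : ℕ) : C (-1) r = (-1) ^ r := by
  simp [C]

lemma D_natCast_right (n : ℤ) (r : ℕ) :
    D n r = (-1) ^ r * (C (n - r) r + C (n - r - 1) (r - 1)) := by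
  simp [D]

lemma D_of_neg (n : ℤ) {r : ℤ} (hr : r < 0) : D n r = 0 := by
  simp [D, C_of_neg _ hr, C_of_neg _ (show r - 1 < 0 by omega)]

lemma D_zero_right (n : ℤ) : D n 0 = 1 := by
  simp [D, C_zero_right, C_of_neg]

lemma D_self (k : ℕ) (hk : k ≠ 0) : D k k = -1 := by
  obtain ⟨j, rfl⟩ : ∃ j, k = j + 1 := ⟨k - 1, by omega⟩
  rw [D_natCast_right, sub_self, C_eq_zero_of_lt le_rfl (by positivity)]
  push_cast
  rw [add_sub_cancel_right, C_neg_one, zero_add, pow_succ, mul_neg_one, neg_mul,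
    ← pow_add, ← two_mul, pow_mul]
  simp

lemma D_eq_zero {n r : ℤ} (hrn : r < n) (hnr : n < 2 * r) : D n r = 0 := by
  rw [D, C_eq_zero_of_lt (by omega) (by omega), C_eq_zero_of_lt (by omega) (by omega)]
  simp

lemma D_rec (n r : ℤ) : D n r = D (n - 1) r - D (n - 2) (r - 1) := by
  rcases lt_or_ge r 0 with hr | hr
  · simp [D_of_neg _ hr, D_of_neg _ (show r - 1 < 0 by omega)]
  lift r to ℕ using hr
  cases r with
  | zero => simp [D_zero_right, D_of_neg]
  | succ k =>
    have h₁ := C_pascal (n - (k + 1)) (k + 1)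
    have h₂ := C_pascal (n - (k + 1) - 1) k
    rw [show ((k + 1 : ℕ) : ℤ) - 1 = k by push_cast; ring, D_natCast_right, D_natCast_right,
      D_natCast_right]
    push_cast
    linear_combination (norm := ring_nf) (-1) ^ (k + 1) * (h₁ + h₂)

def compCoeff (n : ℤ) (k : ℕ) : ℤ :=
  ∑ r ∈ range (k + 1), D n r * C (n - 2 * r) (k - r)

lemma compCoeff_zero_right (n : ℤ) : compCoeff n 0 = 1 := by
  simp [compCoeff, D_zero_right, C_zero_right]

lemma compCoeff_succ_succ (n : ℤ) (k : ℕ) :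
    compCoeff (n + 1) (k + 1) = compCoeff n (k + 1) + compCoeff n k - compCoeff (n - 1) k := by
  have hterm (r : ℕ) : D (n + 1) r * C (n + 1 - 2 * r) (k + 1 - r) =
      D n r * C (n - 2 * r) (k + 1 - r) + D n r * C (n - 2 * r) (k - r) -
        D (n - 1) (r - 1) * C (n + 1 - 2 * r) (k + 1 - r) := by
    have hD := D_rec (n + 1) r
    have hC := C_pascal (n + 1 - 2 * r) (k + 1 - r)
    linear_combination (norm := ring_nf) C (n + 1 - 2 * r) (k + 1 - r) * hD + D n r * hC
  have hlast : ∑ r ∈ range (k + 2), D n r * C (n - 2 * r) (k - r) = compCoeff n k := by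
    rw [sum_range_succ, C_of_neg _ (by push_cast; omega), mul_zero, add_zero, compCoeff]
  have hshift : ∑ r ∈ range (k + 2), D (n - 1) (r - 1) * C (n + 1 - 2 * r) (k + 1 - r) =
      compCoeff (n - 1) k := by
    rw [sum_range_succ', Nat.cast_zero, zero_sub, D_of_neg _ (by norm_num), zero_mul, add_zero,
      compCoeff]
    refine sum_congr rfl fun r _ => ?_
    push_cast
    ring_nf
  simp only [compCoeff, Nat.cast_add, Nat.cast_one, hterm, sum_sub_distrib, sum_add_distrib]
  rw [hlast, hshift]
  rfl

lemma compCoeff_self (k : ℕ) (hk : k ≠ 0) : compCoeff k k = 0 := by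
  obtain ⟨j, rfl⟩ : ∃ j, k = j + 1 := ⟨k - 1, by omega⟩
  have hmid : ∑ r ∈ range j, D (j + 1 : ℕ) (r + 1 : ℕ) * C ((j + 1 : ℕ) - 2 * (r + 1 : ℕ))
      ((j + 1 : ℕ) - (r + 1 : ℕ)) = 0 := by
    refine sum_eq_zero fun r hr => ?_
    rw [mem_range] at hr
    rcases le_or_gt (2 * (r + 1)) (j + 1) with h | h
    · rw [C_eq_zero_of_lt (by omega) (by omega), mul_zero]
    · rw [D_eq_zero (by omega) (by omega), zero_mul]
  rw [compCoeff, sum_range_succ, sum_range_succ', hmid, D_self _ hk, sub_self, C_zero_right]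
  simp only [Nat.cast_zero, mul_zero, sub_zero, D_zero_right, C_self]
  norm_num

lemma compCoeff_eq_ite (k : ℕ) {n : ℤ} (hkn : k ≤ n) :
    compCoeff n k = if k = 0 then 1 else 0 := by
  induction k generalizing n with
  | zero => simp [compCoeff_zero_right]
  | succ j ih =>
    induction n, hkn using Int.leInduction with
    | base => simpa using compCoeff_self (j + 1) (by omega)
    | succ n hn ihn =>
      rw [compCoeff_succ_succ, ihn, ih (by omega), ih (by omega)]
      simp

lemma sum_comp_triangular {R : Type*} [CommSemiring R] (a b : ℕ → ℕ → R) (g : ℕ → R) (n : ℕ) :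
    ∑ r ∈ range (n / 2 + 1), a n r * ∑ s ∈ range ((n - 2 * r) / 2 + 1),
        b (n - 2 * r) s * g (n - 2 * r - 2 * s) =
      ∑ k ∈ range (n / 2 + 1), (∑ r ∈ range (k + 1), a n r * b (n - 2 * r) (k - r)) *
        g (n - 2 * k) := by
  have hlen (r : ℕ) (hr : r ∈ range (n / 2 + 1)) : (n - 2 * r) / 2 + 1 = n / 2 + 1 - r := by
    rw [mem_range] at hr
    omega
  simp_rw +contextual [hlen, mul_sum]
  rw [← sum_range_diag_flip]
  refine sum_congr rfl fun k _ => ?_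
  rw [sum_mul]
  refine sum_congr rfl fun r hr => ?_
  rw [mem_range] at hr
  rw [show n - 2 * r - 2 * (k - r) = n - 2 * k by omega, mul_assoc]

lemma compCoeff_natCast (n k : ℕ) (hk : 2 * k ≤ n) :
    compCoeff n k = ∑ r ∈ range (k + 1), D n r * C (n - 2 * r : ℕ) (k - r : ℕ) := by
  refine sum_congr rfl fun r hr => ?_
  rw [mem_range] at hr
  rw [Nat.cast_sub (by omega), Nat.cast_sub (by omega)]
  push_cast
  rfl

theorem stmt_3 (f g : ℕ → ℂ)
    (h : ∀ n : ℕ, f n = ∑ r ∈ Finset.range (n / 2 + 1), (C n r : ℂ) * g (n - 2 * r)) :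
    ∀ n : ℕ, g n = ∑ r ∈ Finset.range (n / 2 + 1), (D n r : ℂ) * f (n - 2 * r) := by
  intro n
  calc g n = ∑ k ∈ range (n / 2 + 1), (compCoeff n k : ℂ) * g (n - 2 * k) := by
        rw [sum_eq_single_of_mem 0 (by simp)]
        · simp [compCoeff_zero_right]
        · intro k hk hk0
          rw [mem_range] at hk
          rw [compCoeff_eq_ite k (by omega), if_neg hk0, Int.cast_zero, zero_mul]
    _ = ∑ k ∈ range (n / 2 + 1),
          (∑ r ∈ range (k + 1), (D n r : ℂ) * C (n - 2 * r : ℕ) (k - r : ℕ)) * g (n - 2 * k) := by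
        refine sum_congr rfl fun k hk => ?_
        rw [mem_range] at hk
        rw [compCoeff_natCast n k (by omega)]
        push_cast
        rfl
    _ = ∑ r ∈ range (n / 2 + 1), (D n r : ℂ) * f (n - 2 * r) := by
        simp only [h]
        exact (sum_comp_triangular (fun n r => (D n r : ℂ)) (fun m s => (C m s : ℂ)) g n).symm
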